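/- Let x̄ ∈ ℝⁿ and let P ⊆ Ω be a measurable set with ℙ(P) > 0. Suppose ŷ : Ω → ℝⁿ is a measurable, integrable function such that for every ξ ∈ P, ŷ(ξ) ≥ 0, W ŷ(ξ) = h(ξ) − T(ξ) x̄, and qᵀ ŷ(ξ) = Q(x̄, ξ) (i.e., ŷ(ξ) is an optimal solution of the subproblem). Then Q(x̄, E[ξ|P]) ≤ E[ Q(x̄, ·) | P ]; that is, the aggregated subproblem value is a lower bound on the conditional expected subproblem value. -/

import Mathlib

open MeasureTheory Matrix

/-!
Averaging the optimal scenario solutions `ŷ` over `P` gives, by linearity of the conditional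
average, a feasible point of the aggregated problem whose cost is `E[Q(x̄, ·) | P]`; this bounds the
aggregated value whenever it is finite. If the aggregated problem is unbounded below, Farkas' lemma
yields a recession ray `d ≥ 0`, `W d = 0`, `qᵀ d < 0`, which makes every scenario problem unbounded
too, so that both sides take the value `sInf` assigns to sets unbounded below.
-/

/-- Conditional average `E[g | P] = (1/ℙ(P)) ∫_P g dℙ`. -/
noncomputable def condAvg {Ω : Type*} [MeasurableSpace Ω] (μ : Measure Ω) (P : Set Ω)
    {E : Type*} [NormedAddCommGroup E] [NormedSpace ℝ E] (g : Ω → E) : E :=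
  ((μ P).toReal)⁻¹ • ∫ ξ in P, g ξ ∂μ

/-- LP value function `inf { qᵀ y : W y = b, y ≥ 0 }`. -/
noncomputable def lpVal {m n : ℕ} (W : Matrix (Fin m) (Fin n) ℝ) (q : Fin n → ℝ)
    (b : Fin m → ℝ) : ℝ :=
  sInf {v : ℝ | ∃ y : Fin n → ℝ, (∀ j, 0 ≤ y j) ∧ W.mulVec y = b ∧ v = q ⬝ᵥ y}

section ConicHull

variable {ι E : Type*} [Fintype ι] [AddCommGroup E] [Module ℝ E]

lemma exists_sub_smul_nonneg_eq_zero {y c : ι → ℝ} (hy : 0 ≤ y) (hc : ∃ j, 0 < c j) :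
    ∃ t : ℝ, 0 ≤ y - t • c ∧ ∃ j, 0 < c j ∧ (y - t • c) j = 0 := by
  classical
  obtain ⟨j₀, hj₀, hmin⟩ := Finset.exists_min_image {j | 0 < c j} (fun j => y j / c j)
    (by simpa [Finset.Nonempty] using hc)
  rw [Finset.mem_filter_univ] at hj₀
  have ht : 0 ≤ y j₀ / c j₀ := div_nonneg (hy j₀) hj₀.le
  refine ⟨y j₀ / c j₀, fun j => ?_, j₀, hj₀, by simp [hj₀.ne']⟩
  simp only [Pi.zero_apply, Pi.sub_apply, Pi.smul_apply, smul_eq_mul, sub_nonneg]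
  rcases lt_or_ge 0 (c j) with hcj | hcj
  · calc y j₀ / c j₀ * c j ≤ y j / c j * c j :=
          mul_le_mul_of_nonneg_right (hmin j ((Finset.mem_filter_univ _).2 hcj)) hcj.le
      _ = y j := div_mul_cancel₀ _ hcj.ne'
  · exact (mul_nonpos_of_nonneg_of_nonpos ht hcj).trans (hy j)

/-- Conic Carathéodory theorem. -/
theorem exists_nonneg_map_eq_injOn (A : (ι → ℝ) →ₗ[ℝ] E) {y : ι → ℝ} (hy : 0 ≤ y) :
    ∃ z, 0 ≤ z ∧ A z = A y ∧ Set.InjOn A {c | ∀ j, z j = 0 → c j = 0} := by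
  classical
  induction hk : (Finset.univ.filter fun j => y j ≠ 0).card using Nat.strong_induction_on
    generalizing y with
  | _ k ih =>
  by_cases hinj : Set.InjOn A {c | ∀ j, y j = 0 → c j = 0}
  · exact ⟨y, hy, rfl, hinj⟩
  -- A kernel vector supported where `y` is lets us move `y` along it until one more coordinate
  -- vanishes.
  obtain ⟨c, hc_supp, hAc, hc⟩ :
      ∃ c : ι → ℝ, (∀ j, y j = 0 → c j = 0) ∧ A c = 0 ∧ ∃ j, 0 < c j := by
    simp only [Set.InjOn, Set.mem_ofPred_eq, not_forall] at hinj
    obtain ⟨c₁, hc₁, c₂, hc₂, hA, hne⟩ := hinj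
    obtain ⟨j, hj⟩ := Function.ne_iff.1 (sub_ne_zero.2 hne)
    rcases (ne_iff_lt_or_gt.1 hj) with hneg | hpos
    · exact ⟨c₂ - c₁, fun i hi => by simp [hc₁ i hi, hc₂ i hi], by simp [hA],
        j, by simpa using hneg⟩
    · exact ⟨c₁ - c₂, fun i hi => by simp [hc₁ i hi, hc₂ i hi], by simp [hA], j, hpos⟩
  obtain ⟨t, hnonneg, j, hcj, hzero⟩ := exists_sub_smul_nonneg_eq_zero hy hc
  have hlt : (Finset.univ.filter fun i => (y - t • c) i ≠ 0).card < k := by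
    rw [← hk]
    refine Finset.card_lt_card ⟨fun i => ?_, fun hsub => ?_⟩
    · simp only [Finset.mem_filter_univ]
      exact mt fun hi => by simp [hi, hc_supp i hi]
    · exact ((Finset.mem_filter_univ _).1 (hsub ((Finset.mem_filter_univ _).2
        fun hyj => hcj.ne' (hc_supp j hyj)))) hzero
  obtain ⟨z, hz, hAz, hinj⟩ := ih _ hlt hnonneg rfl
  exact ⟨z, hz, by simp [hAz, hAc], hinj⟩

end ConicHull

section Topology

variable {E F : Type*} [AddCommGroup E] [Module ℝ E] [TopologicalSpace E]
  [IsTopologicalAddGroup E] [ContinuousSMul ℝ E] [T2Space E]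

lemma LinearMap.isClosed_image_of_injOn [AddCommGroup F] [Module ℝ F] [TopologicalSpace F]
    [IsTopologicalAddGroup F] [ContinuousSMul ℝ F] [T2Space F] [FiniteDimensional ℝ F]
    (A : F →ₗ[ℝ] E) {V : Submodule ℝ F} (hA : Set.InjOn A V) {K : Set F} (hK : IsClosed K)
    (hKV : K ⊆ V) : IsClosed (A '' K) := by
  have hemb : Topology.IsClosedEmbedding (A.domRestrict V) :=
    LinearMap.isClosedEmbedding_of_injective <| LinearMap.ker_eq_bot.2 fun x y hxy =>
      Subtype.ext (hA x.2 y.2 hxy)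
  have himage : A.domRestrict V '' (Subtype.val ⁻¹' K) = A '' K := by
    rw [← Subtype.range_coe (s := (V : Set F))] at hKV
    exact (Set.image_image A Subtype.val _).symm.trans
      (congrArg _ (Set.image_preimage_eq_of_subset hKV))
  rw [← himage]
  exact hemb.isClosedMap _ (hK.preimage continuous_subtype_val)

variable {ι : Type*} [Fintype ι]

/-- By the conic Carathéodory theorem, the image of the orthant is the finite union of the images
of its faces on whose spans `A` is injective. -/
theorem LinearMap.isClosed_image_nonneg (A : (ι → ℝ) →ₗ[ℝ] E) : IsClosed (A '' Set.Ici 0) := by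
  classical
  let V : Set ι → Submodule ℝ (ι → ℝ) := fun s => Submodule.pi s fun _ => ⊥
  have hV : ∀ s c, c ∈ V s ↔ ∀ j ∈ s, c j = 0 := by simp [V, Submodule.mem_pi]
  have hunion : A '' Set.Ici 0 = ⋃ s ∈ {s | Set.InjOn A (V s)}, A '' (Set.Ici 0 ∩ V s) := by
    refine subset_antisymm ?_ (Set.iUnion₂_subset fun s _ => Set.image_mono Set.inter_subset_left)
    rintro _ ⟨y, hy, rfl⟩
    obtain ⟨z, hz, hAz, hinj⟩ := exists_nonneg_map_eq_injOn A hy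
    refine Set.mem_biUnion (x := {j | z j = 0}) ?_ ⟨z, ⟨hz, (hV _ _).2 fun j hj => hj⟩, hAz⟩
    exact fun c hc c' hc' => hinj (fun j hj => (hV _ _).1 hc j hj) (fun j hj => (hV _ _).1 hc' j hj)
  rw [hunion]
  exact (Set.toFinite _).isClosed_biUnion fun s hs =>
    A.isClosed_image_of_injOn hs (isClosed_Ici.inter (V s).closed_of_finiteDimensional)
      Set.inter_subset_right

/-- Farkas' lemma. -/
theorem LinearMap.exists_dual_of_notMem_image_nonneg [LocallyConvexSpace ℝ E]
    (A : (ι → ℝ) →ₗ[ℝ] E) {b : E} (hb : b ∉ A '' Set.Ici 0) :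
    ∃ f : StrongDual ℝ E, (∀ y, 0 ≤ y → 0 ≤ f (A y)) ∧ f b < 0 := by
  let C : ProperCone ℝ E := ⟨(PointedCone.positive ℝ (ι → ℝ)).map A, A.isClosed_image_nonneg⟩
  obtain ⟨f, hf, hfb⟩ := C.hyperplane_separation_point hb
  exact ⟨f, fun y hy => hf _ ⟨y, hy, rfl⟩, hfb⟩

end Topology

section LinearProgram

variable {κ ι : Type*} [Fintype ι] (W : Matrix κ ι ℝ) (q : ι → ℝ)

def lpObjectiveSet (b : κ → ℝ) : Set ℝ :=
  {v | ∃ y : ι → ℝ, (∀ j, 0 ≤ y j) ∧ W *ᵥ y = b ∧ v = q ⬝ᵥ y}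

variable {W q}

lemma not_bddBelow_lpObjectiveSet_of_ray {b : κ → ℝ} {y d : ι → ℝ} (hy : ∀ j, 0 ≤ y j)
    (hWy : W *ᵥ y = b) (hd : ∀ j, 0 ≤ d j) (hWd : W *ᵥ d = 0) (hqd : q ⬝ᵥ d < 0) :
    ¬ BddBelow (lpObjectiveSet W q b) := by
  rw [not_bddBelow_iff]
  intro B
  set t := (|q ⬝ᵥ y - B| + 1) / -(q ⬝ᵥ d) with ht_def
  have ht : 0 ≤ t := div_nonneg (by positivity) (by linarith)
  have hval : q ⬝ᵥ (y + t • d) = q ⬝ᵥ y - |q ⬝ᵥ y - B| - 1 := by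
    rw [dotProduct_add, dotProduct_smul, smul_eq_mul, ht_def, div_neg, neg_mul,
      div_mul_cancel₀ _ hqd.ne]
    ring
  refine ⟨_, ⟨y + t • d, fun j => add_nonneg (hy j) (smul_nonneg ht (hd j)), ?_, rfl⟩, ?_⟩
  · rw [mulVec_add, mulVec_smul, hWd, smul_zero, add_zero, hWy]
  · rw [hval]
    linarith [le_abs_self (q ⬝ᵥ y - B)]

variable [Fintype κ]

/-- Separate `(0, -1)` from the cone `{(W y, qᵀ y) | y ≥ 0}`: either it lies in the cone, which
is the ray, or the separating functional bounds `qᵀ y` from below on the feasible set. -/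
lemma exists_ray_of_not_bddBelow {b : κ → ℝ} (hb : ¬ BddBelow (lpObjectiveSet W q b)) :
    ∃ d : ι → ℝ, (∀ j, 0 ≤ d j) ∧ W *ᵥ d = 0 ∧ q ⬝ᵥ d < 0 := by
  let A : (ι → ℝ) →ₗ[ℝ] (κ → ℝ) × ℝ := W.mulVecLin.prod (dotProductBilin ℝ ℝ q)
  have hA : ∀ y, A y = (W *ᵥ y, q ⬝ᵥ y) := fun y => rfl
  by_cases hray : ((0, -1) : (κ → ℝ) × ℝ) ∈ A '' Set.Ici 0
  · obtain ⟨d, hd, hAd⟩ := hray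
    rw [hA, Prod.mk.injEq] at hAd
    exact ⟨d, hd, hAd.1, by linarith [hAd.2]⟩
  obtain ⟨f, hf, hf0⟩ := A.exists_dual_of_notMem_image_nonneg hray
  have hfb : ∀ s : ℝ, f (b, s) = f (b, 0) + s * f (0, 1) := fun s => by
    rw [← smul_eq_mul, ← map_smul, ← map_add, Prod.smul_mk, Prod.mk_add_mk, smul_zero, add_zero,
      smul_eq_mul, mul_one, zero_add]
  have hpos : 0 < f (0, 1) := by
    have : f (0, -1) = -f (0, 1) := by rw [← map_neg, Prod.neg_mk, neg_zero]
    linarith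
  refine absurd ⟨-f (b, 0) / f (0, 1), ?_⟩ hb
  rintro _ ⟨y, hy, hWy, rfl⟩
  have := hf y (Pi.le_def.2 hy)
  rw [hA, hWy, hfb] at this
  rw [div_le_iff₀ hpos]
  linarith

theorem not_bddBelow_lpObjectiveSet_of_not_bddBelow {b b' : κ → ℝ}
    (hb : ¬ BddBelow (lpObjectiveSet W q b)) {y : ι → ℝ} (hy : ∀ j, 0 ≤ y j) (hWy : W *ᵥ y = b') :
    ¬ BddBelow (lpObjectiveSet W q b') :=
  let ⟨_, hd, hWd, hqd⟩ := exists_ray_of_not_bddBelow hb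
  not_bddBelow_lpObjectiveSet_of_ray hy hWy hd hWd hqd

end LinearProgram

lemma lpVal_eq_sInf {m n : ℕ} (W : Matrix (Fin m) (Fin n) ℝ) (q : Fin n → ℝ) (b : Fin m → ℝ) :
    lpVal W q b = sInf (lpObjectiveSet W q b) :=
  rfl

section ConditionalAverage

variable {Ω E : Type*} [MeasurableSpace Ω] {μ : Measure Ω} {P : Set Ω}
  [NormedAddCommGroup E] [NormedSpace ℝ E]

lemma condAvg_congr {f g : Ω → E} (hP : MeasurableSet P) (hfg : Set.EqOn f g P) :
    condAvg μ P f = condAvg μ P g := by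
  rw [condAvg, condAvg, setIntegral_congr_fun hP hfg]

lemma condAvg_zero : condAvg μ P (fun _ => (0 : E)) = 0 := by
  simp [condAvg]

lemma condAvg_sub {f g : Ω → E} (hf : IntegrableOn f P μ) (hg : IntegrableOn g P μ) :
    condAvg μ P (fun ξ => f ξ - g ξ) = condAvg μ P f - condAvg μ P g := by
  rw [condAvg, integral_sub hf hg, smul_sub, condAvg, condAvg]

lemma condAvg_nonneg {f : Ω → ℝ} (hP : MeasurableSet P) (hf : ∀ ξ ∈ P, 0 ≤ f ξ) :
    0 ≤ condAvg μ P f :=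
  smul_nonneg (by positivity) (setIntegral_nonneg hP hf)

lemma ContinuousLinearMap.map_condAvg [CompleteSpace E] {F : Type*} [NormedAddCommGroup F]
    [NormedSpace ℝ F] [CompleteSpace F] (L : E →L[ℝ] F) {g : Ω → E} (hg : IntegrableOn g P μ) :
    L (condAvg μ P g) = condAvg μ P (fun ξ => L (g ξ)) := by
  rw [condAvg, condAvg, L.map_smul, ← L.integral_comp_comm hg]

variable {κ ι : Type*} [Fintype κ] [Fintype ι]

lemma condAvg_mulVec {g : Ω → ι → ℝ} (hg : IntegrableOn g P μ) (W : Matrix κ ι ℝ) :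
    W *ᵥ condAvg μ P g = condAvg μ P (fun ξ => W *ᵥ g ξ) :=
  W.mulVecLin.toContinuousLinearMap.map_condAvg hg

lemma condAvg_dotProduct {g : Ω → ι → ℝ} (hg : IntegrableOn g P μ) (q : ι → ℝ) :
    q ⬝ᵥ condAvg μ P g = condAvg μ P (fun ξ => q ⬝ᵥ g ξ) :=
  (dotProductBilin ℝ ℝ q).toContinuousLinearMap.map_condAvg hg

lemma condAvg_apply {g : Ω → ι → ℝ} (hg : IntegrableOn g P μ) (j : ι) :
    condAvg μ P g j = condAvg μ P (fun ξ => g ξ j) :=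
  (ContinuousLinearMap.proj j).map_condAvg hg

lemma condAvg_sub_of_mulVec {h : Ω → κ → ℝ} {T : Ω → κ → ι → ℝ} (hh : IntegrableOn h P μ)
    (hT : IntegrableOn T P μ) (x : ι → ℝ) :
    condAvg μ P (fun ξ => h ξ - of (T ξ) *ᵥ x) = condAvg μ P h - of (condAvg μ P T) *ᵥ x := by
  let L : (κ → ι → ℝ) →L[ℝ] κ → ℝ :=
    ((mulVecBilin ℝ ℝ).flip x ∘ₗ (ofLinearEquiv ℝ).toLinearMap).toContinuousLinearMap
  exact (condAvg_sub hh (L.integrable_comp hT)).trans (congrArg _ (L.map_condAvg hT).symm)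

theorem condAvg_mem_lpObjectiveSet (hP : MeasurableSet P) (W : Matrix κ ι ℝ) (q : ι → ℝ)
    {y : Ω → ι → ℝ} (hy : IntegrableOn y P μ) (hy_nonneg : ∀ ξ ∈ P, ∀ j, 0 ≤ y ξ j)
    {b : Ω → κ → ℝ} (hWy : ∀ ξ ∈ P, W *ᵥ y ξ = b ξ) :
    condAvg μ P (fun ξ => q ⬝ᵥ y ξ) ∈ lpObjectiveSet W q (condAvg μ P b) :=
  ⟨condAvg μ P y, fun j => condAvg_apply hy j ▸ condAvg_nonneg hP fun ξ hξ => hy_nonneg ξ hξ j,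
    (condAvg_mulVec hy W).trans (condAvg_congr hP hWy), (condAvg_dotProduct hy q).symm⟩

end ConditionalAverage

theorem stmt3_general {Ω : Type*} [MeasurableSpace Ω] (μ : Measure Ω)
    {m n : ℕ} (W : Matrix (Fin m) (Fin n) ℝ) (q : Fin n → ℝ)
    (h : Ω → Fin m → ℝ) (T : Ω → Fin m → Fin n → ℝ)
    (hh_int : Integrable h μ) (hT_int : Integrable T μ)
    (xbar : Fin n → ℝ) (P : Set Ω) (hPmeas : MeasurableSet P)
    (yhat : Ω → Fin n → ℝ) (hy_int : Integrable yhat μ)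
    (hy_nonneg : ∀ ξ ∈ P, ∀ j, 0 ≤ yhat ξ j)
    (hy_feas : ∀ ξ ∈ P, W.mulVec (yhat ξ) = h ξ - (Matrix.of (T ξ)).mulVec xbar)
    (hy_opt : ∀ ξ ∈ P, q ⬝ᵥ yhat ξ = lpVal W q (h ξ - (Matrix.of (T ξ)).mulVec xbar)) :
    lpVal W q (condAvg μ P h - (Matrix.of (condAvg μ P T)).mulVec xbar) ≤
      condAvg μ P (fun ξ => lpVal W q (h ξ - (Matrix.of (T ξ)).mulVec xbar)) := by
  rw [← condAvg_sub_of_mulVec hh_int.integrableOn hT_int.integrableOn]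
  have hmem := condAvg_mem_lpObjectiveSet hPmeas W q hy_int.integrableOn hy_nonneg hy_feas
  by_cases hbdd : BddBelow (lpObjectiveSet W q (condAvg μ P fun ξ => h ξ - of (T ξ) *ᵥ xbar))
  · exact (csInf_le hbdd hmem).trans_eq (condAvg_congr hPmeas hy_opt)
  -- Unboundedness passes to every scenario; `sInf` of a set unbounded below is `0` on both sides.
  have hzero : ∀ ξ ∈ P, lpVal W q (h ξ - of (T ξ) *ᵥ xbar) = 0 := fun ξ hξ =>
    Real.sInf_of_not_bddBelow <|
      not_bddBelow_lpObjectiveSet_of_not_bddBelow hbdd (hy_nonneg ξ hξ) (hy_feas ξ hξ)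
  rw [lpVal_eq_sInf, Real.sInf_of_not_bddBelow hbdd, condAvg_congr hPmeas hzero, condAvg_zero]

theorem stmt3 {Ω : Type*} [MeasurableSpace Ω] (μ : Measure Ω) [IsProbabilityMeasure μ]
    {m n : ℕ} (W : Matrix (Fin m) (Fin n) ℝ) (q : Fin n → ℝ)
    (h : Ω → Fin m → ℝ) (T : Ω → Fin m → Fin n → ℝ)
    (hh_meas : Measurable h) (hh_int : Integrable h μ)
    (hT_meas : Measurable T) (hT_int : Integrable T μ)
    (xbar : Fin n → ℝ) (P : Set Ω) (hPmeas : MeasurableSet P) (hPpos : 0 < μ P)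
    (yhat : Ω → Fin n → ℝ) (hy_meas : Measurable yhat) (hy_int : Integrable yhat μ)
    (hy_nonneg : ∀ ξ ∈ P, ∀ j, 0 ≤ yhat ξ j)
    (hy_feas : ∀ ξ ∈ P, W.mulVec (yhat ξ) = h ξ - (Matrix.of (T ξ)).mulVec xbar)
    (hy_opt : ∀ ξ ∈ P, q ⬝ᵥ yhat ξ = lpVal W q (h ξ - (Matrix.of (T ξ)).mulVec xbar)) :
    lpVal W q (condAvg μ P h - (Matrix.of (condAvg μ P T)).mulVec xbar) ≤
      condAvg μ P (fun ξ => lpVal W q (h ξ - (Matrix.of (T ξ)).mulVec xbar)) :=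
  stmt3_general μ W q h T hh_int hT_int xbar P hPmeas yhat hy_int hy_nonneg hy_feas hy_opt
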